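/- Suppose Γ is an E-complete maximally tableau FOLP_CS-consistent set of closed Par-formulas, and let E be defined by E(t) = { A : ¬t:_{Par(A)} A ∉ Γ }. Then E satisfies condition E4: if A ∈ E(t) and Par(A) ⊆ X ⊆ Par, then t:_X A ∈ E(!t). -/

import Mathlib

open scoped Classical

/-- Justification terms of FOLP, built from justification variables `jvar i`,
justification constants `jconst i`, and the operations `+`, `·`, `!`, `genₓ`. -/
inductive Tm : Type
  | jvar : ℕ → Tm
  | jconst : ℕ → Tm
  | plus : Tm → Tm → Tm
  | app : Tm → Tm → Tm
  | bang : Tm → Tm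
  | gen : ℕ → Tm → Tm
  deriving DecidableEq

/-- FOLP formulas with extra individual constants from `K` (`K`-formulas).
Individual variables are natural numbers; an argument `Sum.inl x` is an individual
variable, `Sum.inr a` is an element of `K`.  Predicate symbols are indexed by `ℕ`.
Plain FOLP formulas are `Fm Empty`, Par-formulas are `Fm ℕ` (the parameters being a
separate copy of ℕ, namely the `Sum.inr` part), and `D`-formulas are `Fm D`.
`just t X A` is the justification assertion `t :_X A`. -/
inductive Fm (K : Type) : Type
  | pred : ℕ → List (ℕ ⊕ K) → Fm K
  | neg : Fm K → Fm K
  | imp : Fm K → Fm K → Fm K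
  | all : ℕ → Fm K → Fm K
  | ex : ℕ → Fm K → Fm K
  | just : Tm → Finset (ℕ ⊕ K) → Fm K → Fm K

namespace Fm

variable {K K' : Type}

/-- Free individual variables of a `K`-formula.  Recall that
`FVar (t :_X A) = X` (more precisely, the individual-variable part of `X`). -/
noncomputable def fvar : Fm K → Finset ℕ
  | pred _ args => (args.filterMap Sum.getLeft?).toFinset
  | neg A => A.fvar
  | imp A B => A.fvar ∪ B.fvar
  | all x A => A.fvar.erase x
  | ex x A => A.fvar.erase x
  | just _ X _ => (X.toList.filterMap Sum.getLeft?).toFinset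

/-- The elements of `K` occurring in a `K`-formula (for `K = Par` this is `Par(A)`,
for `K = D` this is `D(A)`). -/
noncomputable def kocc : Fm K → Finset K
  | pred _ args => (args.filterMap Sum.getRight?).toFinset
  | neg A => A.kocc
  | imp A B => A.kocc ∪ B.kocc
  | all _ A => A.kocc
  | ex _ A => A.kocc
  | just _ X A => A.kocc ∪ (X.toList.filterMap Sum.getRight?).toFinset

/-- A `K`-formula is closed if it contains no free occurrences of individual variables. -/
def Closed (A : Fm K) : Prop := A.fvar = ∅

/-- Action of a partial substitution (of elements of `K` for individual variables)
on variables/`K`-elements. -/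
def subK (σ : ℕ → Option K) : ℕ ⊕ K → ℕ ⊕ K
  | .inl x => (σ x).elim (.inl x) .inr
  | .inr a => .inr a

/-- Simultaneous substitution of elements of `K` for free individual variables.
In `t :_X A` only the variables belonging to `X` are free, so only those get
substituted (both inside `X` and inside `A`). -/
noncomputable def msubst (σ : ℕ → Option K) : Fm K → Fm K
  | pred Q args => pred Q (args.map (subK σ))
  | neg A => neg (A.msubst σ)
  | imp A B => imp (A.msubst σ) (B.msubst σ)
  | all x A => all x (A.msubst fun y => if y = x then none else σ y)
  | ex x A => ex x (A.msubst fun y => if y = x then none else σ y)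
  | just t X A =>
      just t (X.image (subK σ)) (A.msubst fun y => if Sum.inl y ∈ X then σ y else none)

/-- `A.subst1 x a` is `A(a)`, i.e. `A{x/a}`: the result of replacing all free
occurrences of the individual variable `x` by the element `a : K`. -/
noncomputable def subst1 (x : ℕ) (a : K) (A : Fm K) : Fm K :=
  A.msubst fun y => if y = x then some a else none

/-- Action of a variable-for-variable substitution on arguments. -/
def subVV (x y : ℕ) : ℕ ⊕ K → ℕ ⊕ K
  | .inl z => if z = x then .inl y else .inl z
  | .inr a => .inr a

/-- `A.vsubst x y` is `A{x/y}`: substitution of the individual variable `y` for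
the free occurrences of the individual variable `x`. -/
noncomputable def vsubst (x y : ℕ) : Fm K → Fm K
  | pred Q args => pred Q (args.map (subVV x y))
  | neg A => neg (A.vsubst x y)
  | imp A B => imp (A.vsubst x y) (B.vsubst x y)
  | all z A => if z = x then all z A else all z (A.vsubst x y)
  | ex z A => if z = x then ex z A else ex z (A.vsubst x y)
  | just t X A =>
      if Sum.inl x ∈ X then just t (X.image (subVV x y)) (A.vsubst x y) else just t X A

/-- `FreeFor y x A`: the variable `y` is substitutable for the variable `x` in `A`
(no free occurrence of `x` lies in the scope of a quantifier binding `y`). -/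
def FreeFor (y x : ℕ) : Fm K → Prop
  | pred _ _ => True
  | neg A => FreeFor y x A
  | imp A B => FreeFor y x A ∧ FreeFor y x B
  | all z A => x = z ∨ x ∉ A.fvar ∨ (y ≠ z ∧ FreeFor y x A)
  | ex z A => x = z ∨ x ∉ A.fvar ∨ (y ≠ z ∧ FreeFor y x A)
  | just _ X A => Sum.inl x ∈ X → FreeFor y x A

/-- Action of a renaming on arguments. -/
def subR (σ : ℕ → ℕ) : ℕ ⊕ K → ℕ ⊕ K
  | .inl x => .inl (σ x)
  | .inr a => .inr a

/-- Renaming of all (free and bound) individual variables. -/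
noncomputable def rename (σ : ℕ → ℕ) : Fm K → Fm K
  | pred Q args => pred Q (args.map (subR σ))
  | neg A => neg (A.rename σ)
  | imp A B => imp (A.rename σ) (B.rename σ)
  | all x A => all (σ x) (A.rename σ)
  | ex x A => ex (σ x) (A.rename σ)
  | just t X A => just t (X.image (subR σ)) (A.rename σ)

/-- Mapping the extra individual constants of a `K`-formula along `f : K → K'`. -/
noncomputable def kmap (f : K → K') : Fm K → Fm K'
  | pred Q args => pred Q (args.map (Sum.map id f))
  | neg A => neg (A.kmap f)
  | imp A B => imp (A.kmap f) (B.kmap f)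
  | all x A => all x (A.kmap f)
  | ex x A => ex x (A.kmap f)
  | just t X A => just t (X.image (Sum.map id f)) (A.kmap f)

/-- A size measure used for the well-founded recursion defining truth. -/
noncomputable def size : Fm K → ℕ
  | pred _ _ => 0
  | neg A => A.size + 1
  | imp A B => A.size + B.size + 1
  | all _ A => A.size + 1
  | ex _ A => A.size + 1
  | just _ _ A => A.size + A.fvar.card + 1


theorem fvar_msubst_subset (σ : ℕ → Option K) (A : Fm K) :
    (A.msubst σ).fvar ⊆ A.fvar := by
  induction A generalizing σ with
  | pred Q args =>
      intro y hy
      simp only [msubst, fvar, List.mem_toFinset, List.mem_filterMap, List.mem_map] at hy ⊢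
      obtain ⟨s, ⟨a, ha, rfl⟩, hget⟩ := hy
      cases a with
      | inl z =>
          cases hσ : σ z with
          | none =>
              simp [subK, hσ] at hget
              exact ⟨Sum.inl z, ha, by simp [hget]⟩
          | some b => simp [subK, hσ] at hget
      | inr b => simp [subK] at hget
  | neg A ih => exact ih σ
  | imp A B ihA ihB =>
      simp only [msubst, fvar]
      exact Finset.union_subset_union (ihA σ) (ihB σ)
  | all x A ih =>
      simp only [msubst, fvar]
      exact Finset.erase_subset_erase x (ih _)
  | ex x A ih =>
      simp only [msubst, fvar]
      exact Finset.erase_subset_erase x (ih _)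
  | just t X A ih =>
      intro y hy
      simp only [msubst, fvar, List.mem_toFinset, List.mem_filterMap,
        Finset.mem_toList, Finset.mem_image] at hy ⊢
      obtain ⟨s, ⟨a, ha, rfl⟩, hget⟩ := hy
      cases a with
      | inl z =>
          cases hσ : σ z with
          | none =>
              refine ⟨Sum.inl z, ha, ?_⟩
              simp only [subK, hσ, Option.elim] at hget
              simpa using hget
          | some b => simp [subK, hσ] at hget
      | inr b => simp [subK] at hget

theorem size_msubst_le (σ : ℕ → Option K) (A : Fm K) :
    (A.msubst σ).size ≤ A.size := by
  induction A generalizing σ with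
  | pred Q args => simp [msubst, size]
  | neg A ih => simpa [msubst, size] using ih σ
  | imp A B ihA ihB =>
      simp only [msubst, size]
      have := ihA σ; have := ihB σ; omega
  | all x A ih => simpa [msubst, size] using ih _
  | ex x A ih => simpa [msubst, size] using ih _
  | just t X A ih =>
      simp only [msubst, size]
      have h1 := ih (fun y => if Sum.inl y ∈ X then σ y else none)
      have h2 := Finset.card_le_card
        (fvar_msubst_subset (fun y => if Sum.inl y ∈ X then σ y else none) A)
      omega

theorem size_subst1_le (x : ℕ) (a : K) (A : Fm K) : (A.subst1 x a).size ≤ A.size :=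
  size_msubst_le _ A


/-- `∀A`, the universal closure of `A`. -/
noncomputable def univClosure (A : Fm K) : Fm K :=
  (A.fvar.sort (· ≤ ·)).foldr Fm.all A

theorem size_foldr_all (l : List ℕ) (A : Fm K) :
    (l.foldr Fm.all A).size = A.size + l.length := by
  induction l with
  | nil => simp
  | cons z l ih => simp only [List.foldr, size, ih, List.length_cons]; omega

theorem size_univClosure (A : Fm K) :
    A.univClosure.size = A.size + A.fvar.card := by
  simp [univClosure, size_foldr_all, Finset.length_sort]

end Fm

/-- Embedding plain FOLP formulas into `K`-formulas. -/
noncomputable def toK {K : Type} : Fm Empty → Fm K := Fm.kmap (fun a => a.elim)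

/-- Two FOLP formulas are variable variants if each can be turned into the other
by a renaming of free and bound individual variables. -/
def VariableVariant (A B : Fm Empty) : Prop := ∃ σ : Equiv.Perm ℕ, B = A.rename σ

/-- The axioms of FOLP: a complete list of first order axiom schemes together
with the justification axiom schemes Ctr, Exp, Sum, jK, jT, j4, Gen. -/
inductive FOLPAxiom : Fm Empty → Prop
  | p1 (A B : Fm Empty) : FOLPAxiom (A.imp (B.imp A))
  | p2 (A B C : Fm Empty) : FOLPAxiom ((A.imp (B.imp C)).imp ((A.imp B).imp (A.imp C)))
  | p3 (A B : Fm Empty) : FOLPAxiom (((A.neg).imp (B.neg)).imp (B.imp A))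
  | allElim (x y : ℕ) (A : Fm Empty) : Fm.FreeFor y x A → FOLPAxiom ((Fm.all x A).imp (A.vsubst x y))
  | allImp (x : ℕ) (A B : Fm Empty) : x ∉ A.fvar →
      FOLPAxiom ((Fm.all x (A.imp B)).imp (A.imp (Fm.all x B)))
  | exIntro (x y : ℕ) (A : Fm Empty) : Fm.FreeFor y x A → FOLPAxiom ((A.vsubst x y).imp (Fm.ex x A))
  | exElim (x : ℕ) (A B : Fm Empty) : x ∉ B.fvar →
      FOLPAxiom ((Fm.all x (A.imp B)).imp ((Fm.ex x A).imp B))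
  | ctr (t : Tm) (X : Finset (ℕ ⊕ Empty)) (A : Fm Empty) (y : ℕ) : Sum.inl y ∉ X → y ∉ A.fvar →
      FOLPAxiom ((Fm.just t (insert (Sum.inl y) X) A).imp (Fm.just t X A))
  | exp (t : Tm) (X : Finset (ℕ ⊕ Empty)) (A : Fm Empty) (y : ℕ) : Sum.inl y ∉ X →
      FOLPAxiom ((Fm.just t X A).imp (Fm.just t (insert (Sum.inl y) X) A))
  | sum1 (s t : Tm) (X : Finset (ℕ ⊕ Empty)) (A : Fm Empty) : FOLPAxiom ((Fm.just s X A).imp (Fm.just (Tm.plus s t) X A))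
  | sum2 (s t : Tm) (X : Finset (ℕ ⊕ Empty)) (A : Fm Empty) : FOLPAxiom ((Fm.just s X A).imp (Fm.just (Tm.plus t s) X A))
  | jK (s t : Tm) (X : Finset (ℕ ⊕ Empty)) (A B : Fm Empty) : FOLPAxiom ((Fm.just s X (A.imp B)).imp
      ((Fm.just t X A).imp (Fm.just (Tm.app s t) X B)))
  | jT (t : Tm) (X : Finset (ℕ ⊕ Empty)) (A : Fm Empty) : FOLPAxiom ((Fm.just t X A).imp A)
  | j4 (t : Tm) (X : Finset (ℕ ⊕ Empty)) (A : Fm Empty) : FOLPAxiom ((Fm.just t X A).imp (Fm.just (Tm.bang t) X (Fm.just t X A)))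
  | gen (t : Tm) (X : Finset (ℕ ⊕ Empty)) (A : Fm Empty) (x : ℕ) : Sum.inl x ∉ X →
      FOLPAxiom ((Fm.just t X A).imp (Fm.just (Tm.gen x t) X (Fm.all x A)))

/-- A constant specification is a set of pairs `(c, A)`, read `c : A`
(that is, `c :_∅ A`), where `A` is an axiom instance. -/
def ConstantSpec (CS : Set (ℕ × Fm Empty)) : Prop := ∀ p ∈ CS, FOLPAxiom p.2

/-- `CS` is axiomatically appropriate: every axiom instance has a constant justifying it. -/
def AxiomaticallyAppropriate (CS : Set (ℕ × Fm Empty)) : Prop :=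
  ∀ A, FOLPAxiom A → ∃ c, (c, A) ∈ CS

/-- `CS` is variant closed. -/
def VariantClosed (CS : Set (ℕ × Fm Empty)) : Prop :=
  ∀ c A B, VariableVariant A B → ((c, A) ∈ CS ↔ (c, B) ∈ CS)

/-- Derivability in the axiomatic system `FOLP_CS`:  axioms, axiom necessitation
restricted to `CS`, modus ponens, and universal generalization. -/
inductive Deriv (CS : Set (ℕ × Fm Empty)) : Fm Empty → Prop
  | ax {A : Fm Empty} : FOLPAxiom A → Deriv CS A
  | an {c : ℕ} {A : Fm Empty} : (c, A) ∈ CS → Deriv CS (Fm.just (Tm.jconst c) ∅ A)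
  | mp {A B : Fm Empty} : Deriv CS (A.imp B) → Deriv CS A → Deriv CS B
  | ug {A : Fm Empty} (x : ℕ) : Deriv CS A → Deriv CS (Fm.all x A)

/-- A Mkrtychev model of `FOLP_CS` with domain `D`:  an interpretation `I` of the
predicate symbols and an admissible evidence function `E` satisfying E1–E6. -/
structure MModel (CS : Set (ℕ × Fm Empty)) (D : Type) : Type where
  dom_nonempty : Nonempty D
  I : ℕ → Set (List D)
  E : Tm → Set (Fm D)
  e1 : ∀ c A, (c, A) ∈ CS → toK A ∈ E (Tm.jconst c)
  e2 : ∀ s t (A B : Fm D), Fm.imp A B ∈ E s → A ∈ E t → B ∈ E (Tm.app s t)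
  e3 : ∀ s t, E s ∪ E t ⊆ E (Tm.plus s t)
  e4 : ∀ t (A : Fm D) (X : Finset D), A ∈ E t → A.kocc ⊆ X →
      Fm.just t (X.image Sum.inr) A ∈ E (Tm.bang t)
  e5 : ∀ t (x : ℕ) (A : Fm D), A ∈ E t → Fm.all x A ∈ E (Tm.gen x t)
  e6 : ∀ t (A : Fm D) (x : ℕ) (a : D), A ∈ E t → A.subst1 x a ∈ E t

/-- Truth of a (closed) `D`-formula in a Mkrtychev model. -/
noncomputable def MModel.Sat {CS : Set (ℕ × Fm Empty)} {D : Type} (M : MModel CS D) :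
    Fm D → Prop
  | .pred Q args => ∃ as : List D, args = as.map Sum.inr ∧ as ∈ M.I Q
  | .neg A => ¬ M.Sat A
  | .imp A B => M.Sat A → M.Sat B
  | .all x A => ∀ a : D, M.Sat (A.subst1 x a)
  | .ex x A => ∃ a : D, M.Sat (A.subst1 x a)
  | .just t _ A => A ∈ M.E t ∧ M.Sat A.univClosure
  termination_by F => F.size
  decreasing_by
    all_goals simp only [Fm.size, Fm.size_univClosure]
    all_goals first
      | omega
      | exact Nat.lt_succ_of_le (Fm.size_subst1_le _ _ _)

/-- Truth of an FOLP sentence in a Mkrtychev model. -/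
noncomputable def MModel.SatSentence {CS : Set (ℕ × Fm Empty)} {D : Type}
    (M : MModel CS D) (F : Fm Empty) : Prop := M.Sat (toK F)

/-- A sentence is `FOLP_CS`-valid if it is true in every Mkrtychev model of `FOLP_CS`. -/
def FOLPValid (CS : Set (ℕ × Fm Empty)) (F : Fm Empty) : Prop :=
  ∀ (D : Type) (M : MModel CS D), M.SatSentence F

/-- Satisfiability of a closed Par-formula `A(u₁,…,uₙ)` in a model:
`M ⊩ A(a₁,…,aₙ)` for some `a₁,…,aₙ ∈ D`. -/
noncomputable def MModel.SatPar {CS : Set (ℕ × Fm Empty)} {D : Type}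
    (M : MModel CS D) (F : Fm ℕ) : Prop :=
  ∃ g : ℕ → D, M.Sat (F.kmap g)

/-- `X ⊆ Par`: the set `X` consists of parameters only. -/
def XPar (X : Finset (ℕ ⊕ ℕ)) : Prop := ∀ s ∈ X, ∃ u : ℕ, s = Sum.inr u

/-- One application of an FOLP tableau rule to a branch (represented by the set `S`
of closed Par-formulas occurring on it), producing the list of extended branches
(one branch for a non-branching rule, two for a branching rule). -/
inductive TabRule : Set (Fm ℕ) → List (Set (Fm ℕ)) → Prop
  | fneg {S A} : Fm.neg (Fm.neg A) ∈ S → TabRule S [insert A S]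
  | timp {S A B} : Fm.imp A B ∈ S → TabRule S [insert (Fm.neg A) S, insert B S]
  | fimp {S A B} : Fm.neg (Fm.imp A B) ∈ S → TabRule S [insert A (insert (Fm.neg B) S)]
  | tall {S x A} (u : ℕ) : Fm.all x A ∈ S → TabRule S [insert (A.subst1 x u) S]
  | fex {S x A} (u : ℕ) : Fm.neg (Fm.ex x A) ∈ S →
      TabRule S [insert (Fm.neg (A.subst1 x u)) S]
  | tex {S x A} (u : ℕ) : Fm.ex x A ∈ S → (∀ F ∈ S, u ∉ F.kocc) →
      TabRule S [insert (A.subst1 x u) S]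
  | fall {S x A} (u : ℕ) : Fm.neg (Fm.all x A) ∈ S → (∀ F ∈ S, u ∉ F.kocc) →
      TabRule S [insert (Fm.neg (A.subst1 x u)) S]
  | tcolon {S t X A} : Fm.just t X A ∈ S → XPar X → TabRule S [insert A.univClosure S]
  | fplus {S t s X A} : Fm.neg (Fm.just (Tm.plus t s) X A) ∈ S → XPar X →
      TabRule S [insert (Fm.neg (Fm.just t X A)) (insert (Fm.neg (Fm.just s X A)) S)]
  | fapp {S s t X B} (A : Fm ℕ) : Fm.neg (Fm.just (Tm.app s t) X B) ∈ S → XPar X →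
      (∀ u ∈ A.kocc, Sum.inr u ∈ X) →
      TabRule S [insert (Fm.neg (Fm.just s X (A.imp B))) S,
                 insert (Fm.neg (Fm.just t X A)) S]
  | fbang {S t X A} : Fm.neg (Fm.just (Tm.bang t) X (Fm.just t X A)) ∈ S → XPar X →
      TabRule S [insert (Fm.neg (Fm.just t X A)) S]
  | ctr {S t X A} (u : ℕ) : Fm.neg (Fm.just t X A) ∈ S → XPar X → Sum.inr u ∉ X →
      TabRule S [insert (Fm.neg (Fm.just t (insert (Sum.inr u) X) A)) S]
  | exp {S t X A} (u : ℕ) : Fm.neg (Fm.just t (insert (Sum.inr u) X) A) ∈ S →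
      XPar X → Sum.inr u ∉ X → u ∉ A.kocc →
      TabRule S [insert (Fm.neg (Fm.just t X A)) S]
  | ins {S t X A} (x u : ℕ) : Fm.neg (Fm.just t X (A.subst1 x u)) ∈ S → XPar X →
      TabRule S [insert (Fm.neg (Fm.just t X A)) S]
  | genx {S t X A x} : Fm.neg (Fm.just (Tm.gen x t) X (Fm.all x A)) ∈ S → XPar X →
      TabRule S [insert (Fm.neg (Fm.just t X A)) S]

/-- `ClosedTableau CS S`: there is a closed `FOLP_CS`-tableau beginning with the
formulas of `S`.  A branch closes if it contains both `A` and `¬A`, or contains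
`¬c:A` with `c:A ∈ CS`. -/
inductive ClosedTableau (CS : Set (ℕ × Fm Empty)) : Set (Fm ℕ) → Prop
  | close {S A} : A ∈ S → Fm.neg A ∈ S → ClosedTableau CS S
  | closeCS {S c A} : (c, A) ∈ CS →
      Fm.neg (Fm.just (Tm.jconst c) ∅ (toK A)) ∈ S → ClosedTableau CS S
  | step {S l} : TabRule S l → (∀ S' ∈ l, ClosedTableau CS S') → ClosedTableau CS S

/-- An `FOLP_CS`-tableau proof of the sentence `F`: a closed tableau beginning
with `¬F`. -/
def TabProof (CS : Set (ℕ × Fm Empty)) (F : Fm Empty) : Prop :=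
  ClosedTableau CS {Fm.neg (toK F)}

/-- A set of closed Par-formulas is tableau `FOLP_CS`-consistent if no finite
subset of it has a closed `FOLP_CS`-tableau. -/
def TabConsistent (CS : Set (ℕ × Fm Empty)) (Γ : Set (Fm ℕ)) : Prop :=
  ∀ S : Set (Fm ℕ), S ⊆ Γ → S.Finite → ¬ ClosedTableau CS S

/-- `Γ` is maximal: it has no proper tableau consistent extension by closed Par-formulas. -/
def MaximalCons (CS : Set (ℕ × Fm Empty)) (Γ : Set (Fm ℕ)) : Prop :=
  TabConsistent CS Γ ∧
    ∀ Δ : Set (Fm ℕ), Γ ⊆ Δ → (∀ F ∈ Δ, F.Closed) → TabConsistent CS Δ → Δ = Γ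

/-- `Γ` is E-complete (with parameters as witnesses). -/
def EComplete (Γ : Set (Fm ℕ)) : Prop :=
  (∀ (x : ℕ) (A : Fm ℕ), Fm.ex x A ∈ Γ → ∃ u : ℕ, A.subst1 x u ∈ Γ) ∧
  (∀ (x : ℕ) (A : Fm ℕ), Fm.neg (Fm.all x A) ∈ Γ → ∃ u : ℕ, Fm.neg (A.subst1 x u) ∈ Γ)

/-- The interpretation of the canonical model determined by `Γ`:
`I(Q) = { (u₁,…,uₙ) | Q(u₁,…,uₙ) ∈ Γ }`. -/
def canI (Γ : Set (Fm ℕ)) (Q : ℕ) : Set (List ℕ) :=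
  {us | Fm.pred Q (us.map Sum.inr) ∈ Γ}

/-- The evidence function of the canonical model determined by `Γ`:
`E(t) = { A | ¬ t:_{Par(A)} A ∉ Γ }`. -/
def canE (Γ : Set (Fm ℕ)) (t : Tm) : Set (Fm ℕ) :=
  {A | Fm.neg (Fm.just t (A.kocc.image Sum.inr) A) ∉ Γ}

/-! If `¬!t:_X t:_X A` were in `Γ`, the rule (F!) would reduce it to `¬t:_X A`, and repeated
(Exp) steps to `¬t:_{Par(A)} A`. As `A ∈ E(t)`, the latter is not in `Γ`, so by maximality a
finite part of `Γ` together with it has a closed tableau. Appending that tableau below the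
(F!) and (Exp) steps refutes a finite part of `Γ`. The real work is that closed tableaux may be
weakened: the eigenparameter of a (T∃) or (F∀) step may occur in the larger branch, so
weakening has to be proved up to a permutation of the parameters. -/

namespace Fm

variable {K K' : Type}

theorem kocc_kmap (f : K → K') (A : Fm K) : (A.kmap f).kocc = A.kocc.image f := by
  induction A with
  | pred Q args => ext; simp [kmap, kocc, Sum.getRight?_eq_some_iff]
  | neg A ih => simpa [kmap, kocc] using ih
  | imp A B ihA ihB => simp [kmap, kocc, ihA, ihB, Finset.image_union]
  | all x A ih => simpa [kmap, kocc] using ih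
  | ex x A ih => simpa [kmap, kocc] using ih
  | just t X A ih => ext; simp [kmap, kocc, ih, Sum.getRight?_eq_some_iff]; aesop

theorem mem_kocc_kmap (f : K → K') (A : Fm K) (b : K') :
    b ∈ (A.kmap f).kocc ↔ ∃ a ∈ A.kocc, f a = b := by
  simp [kocc_kmap]

theorem fvar_kmap (f : K → K') (A : Fm K) : (A.kmap f).fvar = A.fvar := by
  induction A with
  | pred Q args => ext; simp [kmap, fvar, Sum.getLeft?_eq_some_iff]
  | neg A ih => simpa [kmap, fvar] using ih
  | imp A B ihA ihB => simp [kmap, fvar, ihA, ihB]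
  | all x A ih => simp [kmap, fvar, ih]
  | ex x A ih => simp [kmap, fvar, ih]
  | just t X A ih => ext; simp [kmap, fvar, Sum.getLeft?_eq_some_iff]

theorem kmap_congr {f g : K → K'} (A : Fm K) (h : ∀ a ∈ A.kocc, f a = g a) :
    A.kmap f = A.kmap g := by
  induction A with
  | pred Q args =>
      simp only [kmap, pred.injEq, true_and]
      refine List.map_congr_left fun s hs => ?_
      cases s with
      | inl x => rfl
      | inr a => simp [h a (by simpa [kocc, Sum.getRight?_eq_some_iff] using hs)]
  | neg A ih => simpa [kmap] using ih h
  | imp A B ihA ihB =>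
      simp only [kocc, Finset.mem_union] at h
      simp [kmap, ihA fun a ha => h a (.inl ha), ihB fun a ha => h a (.inr ha)]
  | all x A ih => simpa [kmap] using ih h
  | ex x A ih => simpa [kmap] using ih h
  | just t X A ih =>
      simp only [kocc, Finset.mem_union] at h
      simp only [kmap, just.injEq, true_and, ih fun a ha => h a (.inl ha), and_true]
      refine Finset.image_congr fun s hs => ?_
      cases s with
      | inl x => rfl
      | inr a => simp [h a (.inr (by simpa [Sum.getRight?_eq_some_iff] using hs))]

theorem kmap_id (A : Fm K) : A.kmap id = A := by
  induction A <;> simp_all [kmap]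

theorem kmap_kmap {K'' : Type} (f : K → K') (g : K' → K'') (A : Fm K) :
    (A.kmap f).kmap g = A.kmap (g ∘ f) := by
  induction A <;> simp_all [kmap, Finset.image_image]

theorem map_subK (f : K → K') (σ : ℕ → Option K) (s : ℕ ⊕ K) :
    Sum.map id f (subK σ s) = subK (fun y => (σ y).map f) (Sum.map id f s) := by
  rcases s with x | a
  · cases h : σ x <;> simp [subK, h]
  · simp [subK]

theorem kmap_msubst (f : K → K') (σ : ℕ → Option K) (A : Fm K) :
    (A.msubst σ).kmap f = (A.kmap f).msubst (fun y => (σ y).map f) := by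
  induction A generalizing σ with
  | pred Q args =>
      simp only [msubst, kmap, List.map_map, pred.injEq, true_and]
      exact List.map_congr_left fun s _ => map_subK f σ s
  | neg A ih => simp [msubst, kmap, ih]
  | imp A B ihA ihB => simp [msubst, kmap, ihA, ihB]
  | all x A ih => simp only [msubst, kmap, ih]; congr; aesop
  | ex x A ih => simp only [msubst, kmap, ih]; congr; aesop
  | just t X A ih =>
      simp only [msubst, kmap, just.injEq, true_and, ih, Finset.image_image]
      exact ⟨Finset.image_congr fun s _ => map_subK f σ s, by congr; aesop⟩

theorem kmap_subst1 (f : K → K') (x : ℕ) (u : K) (A : Fm K) :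
    (A.subst1 x u).kmap f = (A.kmap f).subst1 x (f u) := by
  rw [subst1, kmap_msubst]
  congr; aesop

theorem kmap_univClosure (f : K → K') (A : Fm K) :
    A.univClosure.kmap f = (A.kmap f).univClosure := by
  rw [univClosure, univClosure, fvar_kmap]
  induction A.fvar.sort (· ≤ ·) <;> simp_all [kmap]

-- Unfolding `kmap` on `just` produces `Finset.image` with the classical `DecidableEq K'`
-- instance; this form uses the ambient one, which is what the tableau rules are matched against.
theorem kmap_just [DecidableEq K'] (f : K → K') (t : Tm) (X : Finset (ℕ ⊕ K))
    (A : Fm K) : (just t X A).kmap f = just t (X.image (Sum.map id f)) (A.kmap f) := by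
  rw [kmap]; congr!

theorem kmap_neg (f : K → K') (A : Fm K) : A.neg.kmap f = (A.kmap f).neg := rfl

theorem kmap_imp (f : K → K') (A B : Fm K) :
    (A.imp B).kmap f = (A.kmap f).imp (B.kmap f) := rfl

theorem kmap_all (f : K → K') (x : ℕ) (A : Fm K) :
    (all x A).kmap f = all x (A.kmap f) := rfl

theorem kmap_toK (f : K → K') (A : Fm Empty) : (toK A : Fm K).kmap f = toK A := by
  rw [toK, kmap_kmap]
  exact kmap_congr A fun a => a.elim

theorem closed_neg_just_image_inr (t : Tm) (X : Finset ℕ) (A : Fm ℕ) :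
    (just t (X.image Sum.inr) A).neg.Closed := by
  ext x
  simp [fvar, Sum.getLeft?_eq_some_iff]

theorem kocc_just_image_inr (t : Tm) {X : Finset ℕ} {A : Fm ℕ} (hX : A.kocc ⊆ X) :
    (just t (X.image Sum.inr) A).kocc = X := by
  ext a
  simpa [kocc, Sum.getRight?_eq_some_iff] using @hX a

end Fm

theorem XPar.image {X : Finset (ℕ ⊕ ℕ)} (h : XPar X) (f : ℕ → ℕ) :
    XPar (X.image (Sum.map id f)) := by
  simp only [XPar, Finset.mem_image, forall_exists_index, and_imp, forall_apply_eq_imp_iff₂]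
  intro s hs
  obtain ⟨u, rfl⟩ := h s hs
  exact ⟨f u, rfl⟩

theorem xPar_image_inr (X : Finset ℕ) : XPar (X.image Sum.inr) := by
  simp [XPar]

theorem exists_param_notMem_kocc {S : Set (Fm ℕ)} (hS : S.Finite) :
    ∃ w, ∀ F ∈ S, w ∉ F.kocc := by
  obtain ⟨w, hw⟩ := Infinite.exists_notMem_finset (hS.toFinset.biUnion Fm.kocc)
  exact ⟨w, fun F hF hk => hw (Finset.mem_biUnion.2 ⟨F, hS.mem_toFinset.2 hF, hk⟩)⟩

theorem exists_fresh_perm {S S' : Set (Fm ℕ)} {f : Equiv.Perm ℕ} (hsub : Fm.kmap f '' S ⊆ S')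
    (hfin : S'.Finite) {u : ℕ} (hu : ∀ F ∈ S, u ∉ F.kocc) :
    ∃ w, ∃ g : Equiv.Perm ℕ, (∀ F ∈ S', w ∉ F.kocc) ∧ g u = w ∧
      Fm.kmap g '' S ⊆ S' ∧ ∀ F ∈ S, F.kmap g = F.kmap f := by
  obtain ⟨w, hw⟩ := exists_param_notMem_kocc hfin
  -- Neither `u` nor `f⁻¹ w` occurs in `S`, so composing `f` with their swap changes nothing there.
  suffices h : ∀ F ∈ S, F.kmap ((Equiv.swap u (f.symm w)).trans f) = F.kmap f from
    ⟨w, _, hw, by simp, fun _ ⟨F, hF, hgF⟩ => hgF ▸ h F hF ▸ hsub ⟨F, hF, rfl⟩, h⟩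
  refine fun F hF => Fm.kmap_congr F fun a ha => ?_
  have hau : a ≠ u := by rintro rfl; exact hu F hF ha
  have haw : a ≠ f.symm w := by
    rintro rfl
    exact hw _ (hsub ⟨F, hF, rfl⟩) ((Fm.mem_kocc_kmap _ _ _).2 ⟨_, ha, by simp⟩)
  simp [Equiv.swap_apply_of_ne_of_ne hau haw]

theorem Set.image_insert_subset_insert {α β : Type*} {g : α → β} {s : Set α} {t : Set β}
    (h : g '' s ⊆ t) (a : α) : g '' insert a s ⊆ insert (g a) t := by
  rw [Set.image_insert_eq]; exact Set.insert_subset_insert h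

def RenamesInto (S S' : Set (Fm ℕ)) : Prop := ∃ g : Equiv.Perm ℕ, Fm.kmap g '' S ⊆ S'

namespace TabRule

variable {S S' : Set (Fm ℕ)} {l : List (Set (Fm ℕ))}

theorem finite_of_mem (h : TabRule S l) (hS : S.Finite) {T : Set (Fm ℕ)} (hT : T ∈ l) :
    T.Finite := by
  cases h <;> aesop

theorem exists_of_single {T T' : Set (Fm ℕ)} (h : TabRule S' [T']) (hT : RenamesInto T T') :
    ∃ l', TabRule S' l' ∧ ∀ T' ∈ l', ∃ T₀ ∈ [T], RenamesInto T₀ T' :=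
  ⟨_, h, by simpa using hT⟩

theorem exists_of_pair {T₁ T₂ T₁' T₂' : Set (Fm ℕ)} (h : TabRule S' [T₁', T₂'])
    (h₁ : RenamesInto T₁ T₁') (h₂ : RenamesInto T₂ T₂') :
    ∃ l', TabRule S' l' ∧ ∀ T' ∈ l', ∃ T₀ ∈ [T₁, T₂], RenamesInto T₀ T' :=
  ⟨_, h, by simpa using ⟨.inl h₁, .inr h₂⟩⟩

theorem exists_of_insert {g : Equiv.Perm ℕ} (hsub : Fm.kmap g '' S ⊆ S') {C : Fm ℕ}
    (h : TabRule S' [insert (C.kmap g) S']) :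
    ∃ l', TabRule S' l' ∧ ∀ T' ∈ l', ∃ T ∈ [insert C S], RenamesInto T T' :=
  exists_of_single h ⟨g, Set.image_insert_subset_insert hsub C⟩

theorem exists_of_image_subset (h : TabRule S l) {f : Equiv.Perm ℕ}
    (hsub : Fm.kmap f '' S ⊆ S') (hfin : S'.Finite) :
    ∃ l', TabRule S' l' ∧ ∀ T' ∈ l', ∃ T ∈ l, RenamesInto T T' := by
  have hmap : ∀ {F}, F ∈ S → F.kmap f ∈ S' := fun hF => hsub ⟨_, hF, rfl⟩
  have hins := Set.image_insert_subset_insert hsub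
  cases h with
  | fneg hmem => exact exists_of_insert hsub (.fneg (hmap hmem))
  | timp hmem => exact exists_of_pair (.timp (hmap hmem)) ⟨f, hins _⟩ ⟨f, hins _⟩
  | fimp hmem =>
      exact exists_of_single (.fimp (hmap hmem)) ⟨f, Set.image_insert_subset_insert (hins _) _⟩
  | tall u hmem =>
      exact exists_of_insert hsub (by simpa [Fm.kmap_subst1] using .tall (f u) (hmap hmem))
  | fex u hmem =>
      exact exists_of_insert hsub
        (by simpa [Fm.kmap_neg, Fm.kmap_subst1] using .fex (f u) (hmap hmem))
  | @tex x A u hmem hu =>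
      obtain ⟨w, g, hw, hgu, hgS, hg⟩ := exists_fresh_perm hsub hfin hu
      have hgA : A.kmap g = A.kmap f := by simpa [Fm.kmap] using hg _ hmem
      exact exists_of_insert hgS
        (by simpa [Fm.kmap_subst1, hgu, hgA] using TabRule.tex w (hmap hmem) hw)
  | @fall x A u hmem hu =>
      obtain ⟨w, g, hw, hgu, hgS, hg⟩ := exists_fresh_perm hsub hfin hu
      have hgA : A.kmap g = A.kmap f := by simpa [Fm.kmap] using hg _ hmem
      exact exists_of_insert hgS
        (by simpa [Fm.kmap_neg, Fm.kmap_subst1, hgu, hgA] using TabRule.fall w (hmap hmem) hw)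
  | tcolon hmem hX =>
      have h1 := hmap hmem
      simp only [Fm.kmap_just] at h1
      exact exists_of_insert hsub
        (by simpa [Fm.kmap_univClosure] using .tcolon h1 (hX.image f))
  | @fplus t s X A hmem hX =>
      have h1 := hmap hmem
      simp only [Fm.kmap_neg, Fm.kmap_just] at h1
      refine exists_of_single (.fplus h1 (hX.image f)) ⟨f, ?_⟩
      simpa [Fm.kmap_neg, Fm.kmap_just] using
        Set.image_insert_subset_insert (hins (Fm.just s X A).neg) (Fm.just t X A).neg
  | @fapp s t X B A hmem hX hA =>
      have h1 := hmap hmem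
      simp only [Fm.kmap_neg, Fm.kmap_just] at h1
      have hA' : ∀ u ∈ (A.kmap f).kocc, Sum.inr u ∈ X.image (Sum.map id f) := by
        simp only [Fm.mem_kocc_kmap]
        rintro _ ⟨a, ha, rfl⟩
        exact Finset.mem_image.2 ⟨_, hA a ha, rfl⟩
      refine exists_of_pair (.fapp (A.kmap f) h1 (hX.image f) hA') ⟨f, ?_⟩ ⟨f, ?_⟩
      · simpa [Fm.kmap_neg, Fm.kmap_just, Fm.kmap_imp] using hins (Fm.just s X (A.imp B)).neg
      · simpa [Fm.kmap_neg, Fm.kmap_just] using hins (Fm.just t X A).neg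
  | fbang hmem hX =>
      have h1 := hmap hmem
      simp only [Fm.kmap_neg, Fm.kmap_just] at h1
      exact exists_of_insert hsub
        (by simpa [Fm.kmap_neg, Fm.kmap_just] using .fbang h1 (hX.image f))
  | @ctr t X A u hmem hX hu =>
      have h1 := hmap hmem
      simp only [Fm.kmap_neg, Fm.kmap_just] at h1
      have hu' : Sum.inr (f u) ∉ X.image (Sum.map id f) := by simpa using hu
      exact exists_of_insert hsub
        (by simpa [Fm.kmap_neg, Fm.kmap_just] using TabRule.ctr (f u) h1 (hX.image f) hu')
  | @exp t X A u hmem hX hu hA =>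
      have h1 := hmap hmem
      simp only [Fm.kmap_neg, Fm.kmap_just, Finset.image_insert] at h1
      have hu' : Sum.inr (f u) ∉ X.image (Sum.map id f) := by simpa using hu
      have hA' : f u ∉ (A.kmap f).kocc := by simpa [Fm.mem_kocc_kmap] using hA
      exact exists_of_insert hsub
        (by simpa [Fm.kmap_neg, Fm.kmap_just] using TabRule.exp (f u) h1 (hX.image f) hu' hA')
  | ins x u hmem hX =>
      have h1 := hmap hmem
      simp only [Fm.kmap_neg, Fm.kmap_just, Fm.kmap_subst1] at h1
      exact exists_of_insert hsub
        (by simpa [Fm.kmap_neg, Fm.kmap_just] using .ins x (f u) h1 (hX.image f))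
  | genx hmem hX =>
      have h1 := hmap hmem
      simp only [Fm.kmap_neg, Fm.kmap_just, Fm.kmap_all] at h1
      exact exists_of_insert hsub
        (by simpa [Fm.kmap_neg, Fm.kmap_just] using .genx h1 (hX.image f))

end TabRule

namespace ClosedTableau

variable {CS : Set (ℕ × Fm Empty)}

theorem of_renamesInto {S : Set (Fm ℕ)} (h : ClosedTableau CS S) {S' : Set (Fm ℕ)}
    (hS : RenamesInto S S') (hfin : S'.Finite) : ClosedTableau CS S' := by
  induction h generalizing S' with
  | close hA hnA =>
      obtain ⟨f, hsub⟩ := hS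
      exact .close (hsub ⟨_, hA, rfl⟩) (hsub ⟨_, hnA, rfl⟩)
  | closeCS hc hneg =>
      obtain ⟨f, hsub⟩ := hS
      exact .closeCS hc
        (by simpa [Fm.kmap_neg, Fm.kmap_just, Fm.kmap_toK] using hsub ⟨_, hneg, rfl⟩)
  | step hr _ ih =>
      obtain ⟨f, hsub⟩ := hS
      obtain ⟨l', hr', hl'⟩ := hr.exists_of_image_subset hsub hfin
      refine .step hr' fun T' hT' => ?_
      obtain ⟨T, hT, hTT'⟩ := hl' T' hT'
      exact ih T hT hTT' (hr'.finite_of_mem hfin hT')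

theorem mono {S S' : Set (Fm ℕ)} (h : ClosedTableau CS S) (hSS' : S ⊆ S') (hfin : S'.Finite) :
    ClosedTableau CS S' :=
  h.of_renamesInto ⟨1, by simpa [Fm.kmap_id] using hSS'⟩ hfin

theorem of_insert_neg_just_subset {T : Set (Fm ℕ)} (hT : T.Finite) {t : Tm} {A : Fm ℕ}
    {Y X : Finset ℕ} (hA : A.kocc ⊆ Y) (hYX : Y ⊆ X)
    (h : ClosedTableau CS (insert (Fm.just t (Y.image Sum.inr) A).neg T)) :
    ClosedTableau CS (insert (Fm.just t (X.image Sum.inr) A).neg T) := by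
  suffices ∀ D : Finset ℕ,
      ClosedTableau CS (insert (Fm.just t ((Y ∪ D).image Sum.inr) A).neg T) by
    simpa [Finset.union_eq_right.2 hYX] using this X
  intro D
  induction D using Finset.induction_on with
  | empty => simpa using h
  | @insert u D _ ih =>
      by_cases hu : u ∈ Y ∪ D
      · rwa [Finset.union_insert, Finset.insert_eq_of_mem hu]
      rw [Finset.union_insert, Finset.image_insert]
      refine .step (.exp u (Set.mem_insert _ _) (xPar_image_inr _) (by simpa using hu)
        fun hu' => hu (Finset.mem_union_left D (hA hu'))) fun S hS => ?_
      rw [List.mem_singleton.1 hS]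
      exact ih.mono (Set.insert_subset_insert (Set.subset_insert _ _)) ((hT.insert _).insert _)

end ClosedTableau

theorem MaximalCons.exists_closedTableau_insert {CS : Set (ℕ × Fm Empty)} {Γ : Set (Fm ℕ)}
    (hmax : MaximalCons CS Γ) (hclosed : ∀ F ∈ Γ, F.Closed) {F : Fm ℕ} (hF : F.Closed)
    (hFΓ : F ∉ Γ) : ∃ T ⊆ Γ, T.Finite ∧ ClosedTableau CS (insert F T) := by
  have hincons : ¬ TabConsistent CS (insert F Γ) := fun hcons =>
    hFΓ (hmax.2 _ (Set.subset_insert F Γ) (Set.forall_mem_insert.2 ⟨hF, hclosed⟩) hcons ▸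
      Set.mem_insert F Γ)
  simp only [TabConsistent, not_forall, not_not] at hincons
  obtain ⟨S, hS, hSfin, hSclosed⟩ := hincons
  refine ⟨S \ {F}, by simpa using hS, hSfin.sdiff, hSclosed.mono ?_ (hSfin.sdiff.insert F)⟩
  simp

theorem canonical_E4_general
    (CS : Set (ℕ × Fm Empty))
    (Γ : Set (Fm ℕ)) (hclosed : ∀ F ∈ Γ, F.Closed)
    (hmax : MaximalCons CS Γ)
    (t : Tm) (A : Fm ℕ) (X : Finset ℕ)
    (hA : A ∈ canE Γ t) (hX : A.kocc ⊆ X) :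
    Fm.just t (X.image Sum.inr) A ∈ canE Γ (Tm.bang t) := by
  simp only [canE, Set.mem_ofPred_eq, Fm.kocc_just_image_inr t hX] at hA ⊢
  intro hbang
  obtain ⟨T, hTΓ, hTfin, hT⟩ :=
    hmax.exists_closedTableau_insert hclosed (Fm.closed_neg_just_image_inr _ _ _) hA
  set T' := insert (Fm.just (Tm.bang t) (X.image Sum.inr) (Fm.just t (X.image Sum.inr) A)).neg T
  have hT'fin : T'.Finite := hTfin.insert _
  have hExp : ClosedTableau CS (insert (Fm.just t (X.image Sum.inr) A).neg T') :=
    (hT.mono (Set.insert_subset_insert (Set.subset_insert _ _)) (hT'fin.insert _)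
      ).of_insert_neg_just_subset hT'fin subset_rfl hX
  have hfbang : ClosedTableau CS T' :=
    .step (.fbang (Set.mem_insert _ _) (xPar_image_inr X)) (by simpa using hExp)
  exact hmax.1 T' (Set.insert_subset hbang hTΓ) hT'fin hfbang

/-- condition E4 for the canonical evidence function
`E(t) = {A | ¬t:_{Par(A)} A ∉ Γ}`. -/
theorem canonical_E4
    (CS : Set (ℕ × Fm Empty)) (hCS : ConstantSpec CS)
    (Γ : Set (Fm ℕ)) (hclosed : ∀ F ∈ Γ, F.Closed)
    (hmax : MaximalCons CS Γ) (hE : EComplete Γ)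
    (t : Tm) (A : Fm ℕ) (X : Finset ℕ)
    (hA : A ∈ canE Γ t) (hX : A.kocc ⊆ X) :
    Fm.just t (X.image Sum.inr) A ∈ canE Γ (Tm.bang t) :=
  canonical_E4_general CS Γ hclosed hmax t A X hA hX
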